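/- Let (V, d_T) be a finite tree metric in which all pairwise distances between distinct pairs are distinct, and let MST(V, d_T) denote its unique minimum spanning tree over the complete graph on V. Let v, w ∈ V be distinct vertices with {v, w} not an edge of MST(V, d_T), and let u be the neighbor of v on the unique path from v to w in MST(V, d_T). Then u ≺ (v,w), i.e., d_T(u,v) < d_T(v,w) and d_T(u,w) < d_T(v,w). -/

import Mathlib

/-- The tree metric: the weighted length of the unique path between `x` and `y`
in the tree `G` with edge weights `f`. -/
noncomputable def treeDist {W : Type} (G : SimpleGraph W) (hG : G.IsTree) (f : Sym2 W → ℝ)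
    (x y : W) : ℝ :=
  ((hG.existsUnique_path x y).choose.edges.map f).sum

/-- `d` is a tree metric: it is the restriction to `V` of the path metric of a finite
weighted tree with positive edge weights. -/
def IsTreeMetric {V : Type} (d : V → V → ℝ) : Prop :=
  ∃ (W : Type) (_ : Fintype W) (G : SimpleGraph W) (hG : G.IsTree) (f : Sym2 W → ℝ)
    (ι : V → W), (∀ e ∈ G.edgeSet, 0 < f e) ∧ Function.Injective ι ∧
      ∀ x y, d x y = treeDist G hG f (ι x) (ι y)

/-- All pairwise distances between distinct pairs are distinct: two distinct pairs can only
have equal distance if they are the same unordered pair. -/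
def DistinctDists {V : Type} (d : V → V → ℝ) : Prop :=
  ∀ x y x' y' : V, x ≠ y → x' ≠ y' → d x y = d x' y' → s(x, y) = s(x', y')

/-- The weight of an unordered edge under the (symmetric) distance `d`. -/
noncomputable def sym2Weight {V : Type} (d : V → V → ℝ) : Sym2 V → ℝ :=
  Sym2.lift ⟨fun x y => (d x y + d y x) / 2, fun _ _ => by ring⟩

/-- The total `d`-weight of a finite set of edges. -/
noncomputable def edgesWeight {V : Type} (d : V → V → ℝ) (E : Finset (Sym2 V)) : ℝ :=
  ∑ e ∈ E, sym2Weight d e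

/-- `E` is the edge set of a spanning tree on `V`: it has no loops and the resulting
graph is connected and acyclic. -/
def IsSpanningTreeEdges {V : Type} (E : Set (Sym2 V)) : Prop :=
  (∀ e ∈ E, ¬ e.IsDiag) ∧ (SimpleGraph.fromEdgeSet E).IsTree

/-- `M` is a minimum spanning tree using only edges from `Base`, with edge weights `d`:
it is a spanning tree contained in `Base` minimizing the total weight among all such
spanning trees.  Taking `Base = Set.univ` gives the MST over the complete graph on `V`. -/
def IsMSTOver {V : Type} [Fintype V] [DecidableEq V] (d : V → V → ℝ)
    (Base : Set (Sym2 V)) (M : Finset (Sym2 V)) : Prop :=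
  ↑M ⊆ Base ∧ IsSpanningTreeEdges (↑M : Set (Sym2 V)) ∧
    ∀ E : Finset (Sym2 V), ↑E ⊆ Base → IsSpanningTreeEdges (↑E : Set (Sym2 V)) →
      edgesWeight d M ≤ edgesWeight d E

/-!
The first inequality is the cut property of the minimum spanning tree at the edge `{v, u}`,
which separates `v` from `w`. For the second, write the MST path as `v, u = x₁, x₂, …, xₖ = w`
and show `d(u, xᵢ) < d(v, xᵢ)` by induction on `i`. In the step from `z = xᵢ` to `z' = xᵢ₊₁`,
the four-point condition `d(u,z') + d(v,z) ≤ max (d(u,v) + d(z,z')) (d(u,z) + d(v,z'))` holds,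
and the cut property at `{v, u}` and `{z, z'}` rules out the first alternative.

The four-point condition for `d_T` comes from writing `d_T(x, y)` as the total weight of the
tree edges separating `x` from `y`, and from the fact that two edges of a tree never split four
points in crossing ways.
-/

open SimpleGraph

namespace SimpleGraph

variable {X : Type} {G : SimpleGraph X}

theorem Reachable.deleteEdges_or {a b t : X} (h : G.Reachable a t) :
    (G.deleteEdges {s(a, b)}).Reachable a t ∨ (G.deleteEdges {s(a, b)}).Reachable b t := by
  rw [reachable_iff_reflTransGen] at h
  induction h with
  | refl => exact .inl .rfl
  | @tail y z _ hyz ih =>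
    by_cases he : s(y, z) = s(a, b)
    · rcases Sym2.eq_iff.mp he with ⟨-, rfl⟩ | ⟨-, rfl⟩
      · exact .inr .rfl
      · exact .inl .rfl
    · have hyz' : (G.deleteEdges {s(a, b)}).Adj y z := by simp [hyz, he]
      exact ih.imp (·.trans hyz'.reachable) (·.trans hyz'.reachable)

theorem Connected.reachable_deleteEdges_or (hG : G.Connected) {e : Sym2 X} {x y : X}
    (hxy : ¬ (G.deleteEdges {e}).Reachable x y) (t : X) :
    (G.deleteEdges {e}).Reachable x t ∨ (G.deleteEdges {e}).Reachable y t := by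
  induction e using Sym2.ind with
  | _ a b =>
    have side (z : X) := (hG.preconnected a z).deleteEdges_or (b := b)
    rcases side x with hx | hx <;> rcases side y with hy | hy <;> rcases side t with ht | ht <;>
    first
      | exact absurd (hx.symm.trans hy) hxy
      | exact .inl (hx.symm.trans ht)
      | exact .inr (hy.symm.trans ht)

theorem Connected.reachable_deleteEdges_iff (hG : G.Connected) {e : Sym2 X} {a b : X}
    (hab : ¬ (G.deleteEdges {e}).Reachable a b) (x y : X) :
    (G.deleteEdges {e}).Reachable x y ↔
      ((G.deleteEdges {e}).Reachable a x ↔ (G.deleteEdges {e}).Reachable a y) := by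
  refine ⟨fun h => ⟨(·.trans h), (·.trans h.symm)⟩, fun h => ?_⟩
  by_cases hax : (G.deleteEdges {e}).Reachable a x
  · exact hax.symm.trans (h.mp hax)
  · have hbx := (hG.reachable_deleteEdges_or hab x).resolve_left hax
    have hby := (hG.reachable_deleteEdges_or hab y).resolve_left (mt h.mpr hax)
    exact hbx.symm.trans hby

theorem Walk.reachable_deleteEdges_of_mem_support {x y z : X} (p : G.Walk x y) {e : Sym2 X}
    (he : e ∉ p.edges) (hz : z ∈ p.support) : (G.deleteEdges {e}).Reachable x z := by
  classical
  exact ⟨(p.takeUntil z hz).toDeleteEdges {e} fun e' he' h =>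
    he (Set.mem_singleton_iff.mp h ▸ p.edges_takeUntil_subset_edges hz he')⟩

theorem IsAcyclic.mem_edges_iff_not_reachable_deleteEdges (hG : G.IsAcyclic) {x y : X}
    {p : G.Walk x y} (hp : p.IsPath) {e : Sym2 X} :
    e ∈ p.edges ↔ ¬ (G.deleteEdges {e}).Reachable x y := by
  refine ⟨fun he hr => ?_, p.mem_edges_of_not_reachable_deleteEdges⟩
  induction e using Sym2.ind with
  | _ a b =>
    classical
    obtain ⟨q, hq⟩ := reachable_deleteEdges_iff_exists_walk.mp hr
    have hpq : p = q.bypass := congrArg Subtype.val <|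
      (hG.subsingleton_path x y).elim ⟨p, hp⟩ ⟨q.bypass, q.bypass_isPath⟩
    exact hq (q.edges_bypass_subset_edges (hpq ▸ he))

/-- The tree paths `x₁ — x₂` and `y₁ — y₂` both cross `e₂`, so they meet, and neither crosses
`e₁`. -/
theorem IsAcyclic.reachable_deleteEdges_of_not_reachable (hG : G.IsAcyclic) {e₁ e₂ : Sym2 X}
    {x₁ x₂ y₁ y₂ : X} (hx : (G.deleteEdges {e₁}).Reachable x₁ x₂)
    (hy : (G.deleteEdges {e₁}).Reachable y₁ y₂) (hx' : ¬ (G.deleteEdges {e₂}).Reachable x₁ x₂)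
    (hy' : ¬ (G.deleteEdges {e₂}).Reachable y₁ y₂) : (G.deleteEdges {e₁}).Reachable x₁ y₁ := by
  obtain ⟨p, hp⟩ := (hx.mono (deleteEdges_le _)).exists_isPath
  obtain ⟨q, hq⟩ := (hy.mono (deleteEdges_le _)).exists_isPath
  have hp₁ : e₁ ∉ p.edges := fun h => (hG.mem_edges_iff_not_reachable_deleteEdges hp).mp h hx
  have hq₁ : e₁ ∉ q.edges := fun h => (hG.mem_edges_iff_not_reachable_deleteEdges hq).mp h hy
  induction e₂ using Sym2.ind with
  | _ c c' =>
    have hcp := p.fst_mem_support_of_mem_edges (p.mem_edges_of_not_reachable_deleteEdges hx')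
    have hcq := q.fst_mem_support_of_mem_edges (q.mem_edges_of_not_reachable_deleteEdges hy')
    exact (p.reachable_deleteEdges_of_mem_support hp₁ hcp).trans
      (q.reachable_deleteEdges_of_mem_support hq₁ hcq).symm

def separatingEdges (G : SimpleGraph X) (x y : X) : Set (Sym2 X) :=
  {e | ¬ (G.deleteEdges {e}).Reachable x y}

theorem separatingEdges_comm (x y : X) : G.separatingEdges x y = G.separatingEdges y x := by
  ext e
  simp [separatingEdges, reachable_comm]

end SimpleGraph

section TreeDist

variable {X : Type} {G : SimpleGraph X} (hG : G.IsTree) (f : Sym2 X → ℝ)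

theorem treeDist_eq_of_isPath {x y : X} {p : G.Walk x y} (hp : p.IsPath) :
    treeDist G hG f x y = (p.edges.map f).sum := by
  rw [treeDist, (hG.existsUnique_path x y).unique (hG.existsUnique_path x y).choose_spec.1 hp]

theorem treeDist_comm (x y : X) : treeDist G hG f x y = treeDist G hG f y x := by
  obtain ⟨p, hp, -⟩ := hG.existsUnique_path x y
  rw [treeDist_eq_of_isPath hG f hp, treeDist_eq_of_isPath hG f hp.reverse, Walk.edges_reverse,
    List.map_reverse, List.sum_reverse]

theorem treeDist_self (x : X) : treeDist G hG f x x = 0 :=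
  treeDist_eq_of_isPath hG f Walk.IsPath.nil

theorem treeDist_pos (hf : ∀ e ∈ G.edgeSet, 0 < f e) {x y : X} (hxy : x ≠ y) :
    0 < treeDist G hG f x y := by
  obtain ⟨p, hp, -⟩ := hG.existsUnique_path x y
  rw [treeDist_eq_of_isPath hG f hp]
  refine List.sum_pos _ (by simpa using fun e he => hf e (p.edges_subset_edgeSet he)) ?_
  simpa using Walk.not_nil_of_ne hxy

theorem treeDist_eq_sum_indicator [Fintype X] (x y : X) :
    treeDist G hG f x y = ∑ e, (G.separatingEdges x y).indicator f e := by
  classical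
  obtain ⟨p, hp, -⟩ := hG.existsUnique_path x y
  have hsep : G.separatingEdges x y = ↑p.edges.toFinset := by
    ext e
    simp [separatingEdges, hG.isAcyclic.mem_edges_iff_not_reachable_deleteEdges hp]
  rw [treeDist_eq_of_isPath hG f hp, hsep, Finset.sum_indicator_subset _ (Finset.subset_univ _),
    List.sum_toFinset _ hp.isTrail.edges_nodup]

end TreeDist

def FourPointCondition {V : Type} (d : V → V → ℝ) : Prop :=
  ∀ x₁ x₂ x₃ x₄, d x₁ x₂ + d x₃ x₄ ≤ max (d x₁ x₃ + d x₂ x₄) (d x₁ x₄ + d x₂ x₃)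

section FourPoint

variable {X : Type} {G : SimpleGraph X} {f : Sym2 X → ℝ}

/-- Unless `e` splits `{x₁, x₂, x₃, x₄}` as `x₁x₃ | x₂x₄`, its contribution to
`d(x₁,x₂) + d(x₃,x₄)` is at most its contribution to `d(x₁,x₃) + d(x₂,x₄)`. -/
theorem indicator_separatingEdges_add_le (hG : G.IsTree) (hf : ∀ e ∈ G.edgeSet, 0 ≤ f e)
    (e : Sym2 X) {x₁ x₂ x₃ x₄ : X}
    (h : ¬ ((G.deleteEdges {e}).Reachable x₁ x₃ ∧ (G.deleteEdges {e}).Reachable x₂ x₄ ∧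
      ¬ (G.deleteEdges {e}).Reachable x₁ x₂)) :
    (G.separatingEdges x₁ x₂).indicator f e + (G.separatingEdges x₃ x₄).indicator f e ≤
      (G.separatingEdges x₁ x₃).indicator f e + (G.separatingEdges x₂ x₄).indicator f e := by
  classical
  simp only [Set.indicator_apply, separatingEdges, Set.mem_ofPred_eq]
  by_cases he : e ∈ G.edgeSet
  · induction e using Sym2.ind with
    | _ a b =>
      have hab : ¬ (G.deleteEdges {s(a, b)}).Reachable a b :=
        isAcyclic_iff_forall_isBridge.mp hG.isAcyclic he
      have hfe := hf _ he
      simp only [hG.connected.reachable_deleteEdges_iff hab x₁,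
        hG.connected.reachable_deleteEdges_iff hab x₂,
        hG.connected.reachable_deleteEdges_iff hab x₃] at h ⊢
      by_cases (G.deleteEdges {s(a, b)}).Reachable a x₁ <;>
      by_cases (G.deleteEdges {s(a, b)}).Reachable a x₂ <;>
      by_cases (G.deleteEdges {s(a, b)}).Reachable a x₃ <;>
      by_cases (G.deleteEdges {s(a, b)}).Reachable a x₄ <;>
      simp_all
  · have hG' : G.deleteEdges {e} = G := deleteEdges_eq_self.mpr (by simpa using he)
    simp [hG', hG.connected.preconnected _ _]

theorem treeDist_fourPointCondition [Fintype X] (hG : G.IsTree) (hf : ∀ e ∈ G.edgeSet, 0 ≤ f e) :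
    FourPointCondition (treeDist G hG f) := by
  intro x₁ x₂ x₃ x₄
  simp only [treeDist_eq_sum_indicator hG f, ← Finset.sum_add_distrib]
  by_cases hsplit : ∃ e, (G.deleteEdges {e}).Reachable x₁ x₄ ∧
    (G.deleteEdges {e}).Reachable x₂ x₃ ∧ ¬ (G.deleteEdges {e}).Reachable x₁ x₂
  · obtain ⟨e', h₁₄, h₂₃, h₁₂⟩ := hsplit
    refine le_max_of_le_left (Finset.sum_le_sum fun e _ =>
      indicator_separatingEdges_add_le hG hf e ?_)
    rintro ⟨h₁₃, h₂₄, h₁₂'⟩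
    refine h₁₂' ((hG.isAcyclic.reachable_deleteEdges_of_not_reachable (e₂ := e')
      h₁₃ h₂₄.symm ?_ ?_).trans h₂₄.symm)
    · exact fun h₁₃' => h₁₂ (h₁₃'.trans h₂₃.symm)
    · exact fun h₄₂ => h₁₂ (h₁₄.trans h₄₂)
  · push Not at hsplit
    refine le_max_of_le_right (Finset.sum_le_sum fun e _ => ?_)
    have := indicator_separatingEdges_add_le hG hf e (x₃ := x₄) (x₄ := x₃)
      fun h => h.2.2 (hsplit e h.1 h.2.1)
    rwa [separatingEdges_comm x₄] at this

end FourPoint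

namespace IsTreeMetric

variable {V : Type} {d : V → V → ℝ}

theorem symm (h : IsTreeMetric d) (x y : V) : d x y = d y x := by
  obtain ⟨W, _, G, hG, f, ι, -, -, hd⟩ := h
  rw [hd, hd, treeDist_comm]

theorem dist_self (h : IsTreeMetric d) (x : V) : d x x = 0 := by
  obtain ⟨W, _, G, hG, f, ι, -, -, hd⟩ := h
  rw [hd, treeDist_self]

theorem pos (h : IsTreeMetric d) {x y : V} (hxy : x ≠ y) : 0 < d x y := by
  obtain ⟨W, _, G, hG, f, ι, hf, hι, hd⟩ := h
  rw [hd]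
  exact treeDist_pos hG f hf (hι.ne hxy)

theorem fourPointCondition (h : IsTreeMetric d) : FourPointCondition d := by
  obtain ⟨W, _, G, hG, f, ι, hf, -, hd⟩ := h
  intro x₁ x₂ x₃ x₄
  simp only [hd]
  exact treeDist_fourPointCondition hG (fun e he => (hf e he).le) _ _ _ _

end IsTreeMetric

theorem sym2Weight_mk {V : Type} {d : V → V → ℝ} (hsym : ∀ x y, d x y = d y x) (x y : V) :
    sym2Weight d s(x, y) = d x y := by
  change (d x y + d y x) / 2 = d x y
  rw [hsym y x, add_self_div_two]

section SpanningTree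

variable {V : Type} [DecidableEq V] {M : Finset (Sym2 V)}

theorem fromEdgeSet_erase (M : Finset (Sym2 V)) (e : Sym2 V) :
    fromEdgeSet (↑(M.erase e) : Set (Sym2 V)) =
      (fromEdgeSet (M : Set (Sym2 V))).deleteEdges {e} := by
  rw [Finset.coe_erase, fromEdgeSet_sdiff]
  rfl

theorem IsSpanningTreeEdges.insert_erase (hM : IsSpanningTreeEdges (M : Set (Sym2 V)))
    {e : Sym2 V} {x y : V} (hxy : x ≠ y)
    (hsep : ¬ ((fromEdgeSet (M : Set (Sym2 V))).deleteEdges {e}).Reachable x y) :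
    IsSpanningTreeEdges (↑(insert s(x, y) (M.erase e)) : Set (Sym2 V)) := by
  obtain ⟨hdiag, hT⟩ := hM
  set H := (fromEdgeSet (M : Set (Sym2 V))).deleteEdges {e}
  have hgraph : fromEdgeSet (↑(insert s(x, y) (M.erase e)) : Set (Sym2 V)) = H ⊔ edge x y := by
    rw [Finset.coe_insert, Set.insert_eq, fromEdgeSet_union, fromEdgeSet_erase, sup_comm]
    rfl
  refine ⟨?_, ?_⟩
  · simp only [Finset.coe_insert, Set.mem_insert_iff, Finset.coe_erase, Set.mem_sdiff]
    rintro _ (rfl | ⟨he, -⟩)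
    · simpa using hxy
    · exact hdiag _ he
  rw [hgraph]
  have := hT.connected.nonempty
  have hx (t : V) : (H ⊔ edge x y).Reachable x t := by
    rcases hT.connected.reachable_deleteEdges_or hsep t with ht | ht
    · exact ht.mono le_sup_left
    · exact (Adj.reachable (by simp [edge_adj, hxy])).trans (ht.mono le_sup_left)
  exact ⟨⟨fun a b => (hx a).symm.trans (hx b)⟩,
    (hT.isAcyclic.anti (deleteEdges_le _)).sup_edge_of_not_reachable hsep⟩

end SpanningTree

section MST

variable {V : Type} [Fintype V] [DecidableEq V] {d : V → V → ℝ} {M : Finset (Sym2 V)}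

/-- The cut property, proved by exchanging `{a, b}` for `{x, y}`. -/
theorem IsMSTOver.lt_of_mem_edges (hsym : ∀ x y, d x y = d y x) (hdd : DistinctDists d)
    (hM : IsMSTOver d Set.univ M) {x y : V} {P : (fromEdgeSet (M : Set (Sym2 V))).Walk x y}
    (hP : P.IsPath) {a b : V} (hab : s(a, b) ∈ P.edges) (hne : s(a, b) ≠ s(x, y)) :
    d a b < d x y := by
  obtain ⟨-, hT, hmin⟩ := hM
  have hsep := (hT.2.isAcyclic.mem_edges_iff_not_reachable_deleteEdges hP).mp hab
  have hxy : x ≠ y := by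
    rintro rfl
    exact hsep .rfl
  have hadj := P.adj_of_mem_edges hab
  have habM : s(a, b) ∈ M := hadj.1
  have hxyM : s(x, y) ∉ M.erase s(a, b) := fun h =>
    hsep (Adj.reachable (by rw [← fromEdgeSet_erase]; exact ⟨h, hxy⟩))
  have hle := hmin _ (Set.subset_univ _) (hT.insert_erase hxy hsep)
  rw [edgesWeight, edgesWeight, Finset.sum_insert hxyM, ← Finset.add_sum_erase M _ habM,
    sym2Weight_mk hsym, sym2Weight_mk hsym] at hle
  exact lt_of_le_of_ne (by linarith) fun h => hne (hdd a b x y hadj.ne hxy h)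

theorem IsMSTOver.lt_of_isPath_cons_concat (hsym : ∀ x y, d x y = d y x)
    (hdd : DistinctDists d) (h4 : FourPointCondition d) (hM : IsMSTOver d Set.univ M)
    {v u z z' : V} {hvu : (fromEdgeSet (M : Set (Sym2 V))).Adj v u}
    {pre : (fromEdgeSet (M : Set (Sym2 V))).Walk u z}
    {hzz' : (fromEdgeSet (M : Set (Sym2 V))).Adj z z'}
    (hP : (Walk.cons hvu (pre.concat hzz')).IsPath) (hz : d u z < d v z) :
    d u z' < d v z' := by
  have hvz' : v ≠ z' := fun h =>
    ((Walk.cons_isPath_iff _ _).mp hP).2 (h ▸ (pre.concat hzz').end_mem_support)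
  by_cases hzu : z = u
  · subst hzu
    exact hM.lt_of_mem_edges hsym hdd hP (by simp) (by simp [hvu.ne.symm, hvz'.symm])
  have hvu_lt : d v u < d v z := by
    rw [← Walk.concat_cons] at hP
    exact hM.lt_of_mem_edges hsym hdd hP.of_append_left (by simp)
      (by simp [Ne.symm hzu, hvu.ne.symm])
  have hzz'_lt : d z z' < d u z' := by
    refine hM.lt_of_mem_edges hsym hdd ((Walk.cons_isPath_iff _ _).mp hP).1 (by simp) ?_
    simp only [ne_eq, Sym2.eq_iff, not_or, not_and]
    exact ⟨fun h => absurd h hzu, fun h h' => hzu (h.trans h')⟩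
  have := h4 u z' v z
  rw [hsym u v, hsym z' z, hsym z' v] at this
  rcases le_max_iff.mp this with h | h <;> linarith

theorem IsMSTOver.lt_of_isPath_cons_append (hsym : ∀ x y, d x y = d y x)
    (hdd : DistinctDists d) (h4 : FourPointCondition d) (hM : IsMSTOver d Set.univ M)
    {v u z w : V} (hvu : (fromEdgeSet (M : Set (Sym2 V))).Adj v u)
    (pre : (fromEdgeSet (M : Set (Sym2 V))).Walk u z)
    (r : (fromEdgeSet (M : Set (Sym2 V))).Walk z w)
    (hP : (Walk.cons hvu (pre.append r)).IsPath) (hz : d u z < d v z) : d u w < d v w := by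
  induction r with
  | nil => exact hz
  | cons hzz' r ih =>
    rw [← Walk.concat_append] at hP
    have hprefix : (Walk.cons hvu (pre.concat hzz')).IsPath := by
      rw [← Walk.cons_append] at hP
      exact hP.of_append_left
    exact ih _ hP (hM.lt_of_isPath_cons_concat hsym hdd h4 hprefix hz)

end MST

/-- In a tree metric with pairwise distinct distances, if distinct `v, w` are not
joined by an MST edge and `u` is the neighbor of `v` on the unique path from `v` to `w` in
the MST, then `u ≺ (v,w)`: `d(u,v) < d(v,w)` and `d(u,w) < d(v,w)`. -/
theorem mst_path_first_step_prec {V : Type} [Fintype V] [DecidableEq V] (d : V → V → ℝ)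
    (htm : IsTreeMetric d) (hdd : DistinctDists d)
    (M : Finset (Sym2 V)) (hM : IsMSTOver d Set.univ M)
    (v w : V) (hne : v ≠ w) (hvw : s(v, w) ∉ M)
    (p : (SimpleGraph.fromEdgeSet (↑M : Set (Sym2 V))).Walk v w) (hp : p.IsPath) :
    d (p.getVert 1) v < d v w ∧ d (p.getVert 1) w < d v w := by
  cases p with
  | nil => exact absurd rfl hne
  | @cons _ u _ hvu q =>
    have huw : u ≠ w := by
      rintro rfl
      exact hvw hvu.1
    rw [Walk.getVert_cons _ _ one_ne_zero, Nat.sub_self, Walk.getVert_zero]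
    refine ⟨?_, ?_⟩
    · rw [htm.symm]
      exact hM.lt_of_mem_edges htm.symm hdd hp (by simp) (by simp [huw, hne])
    · refine hM.lt_of_isPath_cons_append htm.symm hdd htm.fourPointCondition hvu .nil q hp ?_
      rw [htm.dist_self]
      exact htm.pos hvu.ne
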